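/- arXiv:1609.01078 — 8 statements merged into one kernel-verified Lean document; each statement's English description precedes it below -/
import Mathlib

section
/- Let G=(V,A) be a finite DAG with weight function w : V → ℕ and budget B ∈ ℕ, and let S ⊆ V satisfy the digraph constraint and the budget constraint. Then there is no strict superset S' ⊋ S satisfying both the digraph constraint and the budget constraint if and only if for every x ∈ V∖S, either S∪{x} violates the digraph constraint or w(S) + w(x) > B. -/
open scoped Classical

/-- `S` satisfies the digraph constraint: every out-neighbor of a member is a member. -/
def DigraphConstraint {V : Type*} (A : Finset (V × V)) (S : Finset V) : Prop :=
  ∀ x ∈ S, ∀ y : V, (x, y) ∈ A → y ∈ S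

theorem maximality_iff_local_maximality_dag
    {V : Type*} [Fintype V] [DecidableEq V]
    (A : Finset (V × V)) (hloop : ∀ v : V, (v, v) ∉ A)
    -- `G` is a DAG: no directed cycle
    (hdag : ∀ v : V, ¬ Relation.TransGen (fun a b : V => (a, b) ∈ A) v v)
    (w : V → ℕ) (B : ℕ) (S : Finset V)
    (hS : DigraphConstraint A S) (hb : ∑ v ∈ S, w v ≤ B) :
    (¬ ∃ S' : Finset V, S ⊂ S' ∧ DigraphConstraint A S' ∧ ∑ v ∈ S', w v ≤ B) ↔
    (∀ x : V, x ∉ S →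
      ¬ DigraphConstraint A (insert x S) ∨ (∑ v ∈ S, w v) + w x > B) := by
  constructor
  · intro hmax x hx
    by_contra h
    push_neg at h
    obtain ⟨hd, hbud⟩ := h
    apply hmax
    refine ⟨insert x S, Finset.ssubset_insert hx, hd, ?_⟩
    rw [Finset.sum_insert hx]
    omega
  · rintro hloc ⟨S', hss, hS', hb'⟩
    -- pick a minimal element of S' \ S
    set r : V → V → Prop := fun a b => Relation.TransGen (fun a b : V => (a, b) ∈ A) b a
    have hwf : WellFounded r := by
      have : IsTrans V r := ⟨fun a b c hab hbc => hbc.trans hab⟩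
      have : IsIrrefl V r := ⟨fun a h => hdag a h⟩
      exact Finite.wellFounded_of_trans_of_irrefl r
    have hne : (↑(S' \ S) : Set V).Nonempty := by
      obtain ⟨x, hx1, hx2⟩ := Finset.exists_of_ssubset hss
      exact ⟨x, by simp [hx1, hx2]⟩
    obtain ⟨x, hxT, hxmin⟩ := hwf.has_min _ hne
    have hxS' : x ∈ S' := (Finset.mem_sdiff.mp hxT).1
    have hxS : x ∉ S := (Finset.mem_sdiff.mp hxT).2
    have hd : DigraphConstraint A (insert x S) := by
      intro z hz y hy
      rcases Finset.mem_insert.mp hz with rfl | hzS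
      · have hyS' : y ∈ S' := hS' z hxS' y hy
        by_contra hyS
        have hyS2 : y ∉ S := fun h => hyS (Finset.mem_insert_of_mem h)
        exact hxmin y (by simp [hyS', hyS2]) (Relation.TransGen.single hy)
      · exact Finset.mem_insert_of_mem (hS z hzS y hy)
    have hbud : (∑ v ∈ S, w v) + w x ≤ B := by
      have hsub : insert x S ⊆ S' := Finset.insert_subset hxS' hss.subset
      have := Finset.sum_le_sum_of_subset (f := w) hsub
      rw [Finset.sum_insert hxS] at this
      omega
    rcases hloc x hxS with h | h
    · exact h hd
    · omega
end

section
/- Let G=(V,A) be a finite DAG with weight function w : V → ℕ and budget B ∈ ℕ, and let S ⊆ V satisfy the weak digraph constraint and the budget constraint. Then there is no strict superset S' ⊋ S satisfying both the weak digraph constraint and the budget constraint if and only if for every x ∈ V∖S, either S∪{x} violates the weak digraph constraint or w(S) + w(x) > B. -/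
open scoped Classical

/-- `S` satisfies the weak digraph constraint: every vertex with a nonempty
in-neighborhood entirely contained in `S` belongs to `S`. -/
def WeakDigraphConstraint {V : Type*} (A : Finset (V × V)) (S : Finset V) : Prop :=
  ∀ x : V, (∃ u : V, (u, x) ∈ A) → (∀ u : V, (u, x) ∈ A → u ∈ S) → x ∈ S

theorem weak_maximality_iff_local_maximality_dag
    {V : Type*} [Fintype V] [DecidableEq V]
    (A : Finset (V × V)) (hloop : ∀ v : V, (v, v) ∉ A)
    -- `G` is a DAG: no directed cycle
    (hdag : ∀ v : V, ¬ Relation.TransGen (fun a b : V => (a, b) ∈ A) v v)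
    (w : V → ℕ) (B : ℕ) (S : Finset V)
    (hS : WeakDigraphConstraint A S) (hb : ∑ v ∈ S, w v ≤ B) :
    (¬ ∃ S' : Finset V, S ⊂ S' ∧ WeakDigraphConstraint A S' ∧ ∑ v ∈ S', w v ≤ B) ↔
    (∀ x : V, x ∉ S →
      ¬ WeakDigraphConstraint A (insert x S) ∨ (∑ v ∈ S, w v) + w x > B) := by
  constructor
  · intro hmax x hx
    by_contra hcon
    push_neg at hcon
    obtain ⟨hwc, hbx⟩ := hcon
    exact hmax ⟨insert x S, Finset.ssubset_insert hx, hwc, by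
      rw [Finset.sum_insert hx]; omega⟩
  · rintro h ⟨S', hss, hS', hb'⟩
    obtain ⟨z, hzS', hzS⟩ := Finset.exists_of_ssubset hss
    haveI : IsTrans V (fun a b : V => Relation.TransGen (fun p q : V => (p, q) ∈ A) b a) :=
      ⟨fun a b c hab hbc => hbc.trans hab⟩
    haveI : IsIrrefl V (fun a b : V => Relation.TransGen (fun p q : V => (p, q) ∈ A) b a) :=
      ⟨fun a ha => hdag a ha⟩
    have hwf : WellFounded (fun a b : V => Relation.TransGen (fun p q : V => (p, q) ∈ A) b a) :=
      Finite.wellFounded_of_trans_of_irrefl _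
    obtain ⟨x, ⟨hxS', hxS⟩, hxmin⟩ :=
      hwf.has_min {a : V | a ∈ S' ∧ a ∉ S} ⟨z, hzS', hzS⟩
    have hsub : insert x S ⊆ S' := Finset.insert_subset hxS' hss.subset
    rcases h x hxS with hbad | hbad
    · apply hbad
      intro y hy hyin
      by_cases hyS : y ∈ S
      · exact Finset.mem_insert_of_mem hyS
      by_cases hyx : y = x
      · exact hyx ▸ Finset.mem_insert_self x S
      -- all in-neighbors of y are in insert x S ⊆ S', so y ∈ S'
      have hyS' : y ∈ S' := hS' y hy (fun u hu => hsub (hyin u hu))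
      -- x must be an in-neighbor of y (else all in S and hS gives y ∈ S)
      have hxy : (x, y) ∈ A := by
        by_contra hxy
        exact hyS (hS y hy (fun u hu => by
          rcases Finset.mem_insert.mp (hyin u hu) with h1 | h1
          · exact absurd (h1 ▸ hu) hxy
          · exact h1))
      exact absurd (Relation.TransGen.single hxy) (hxmin y ⟨hyS', hyS⟩)
    · have : ∑ v ∈ insert x S, w v ≤ ∑ v ∈ S', w v :=
        Finset.sum_le_sum_of_subset hsub
      rw [Finset.sum_insert hxS] at this
      omega
end

section
/- Let G=(V,A) be a finite DAG and let S ⊆ V satisfy the digraph constraint. Let K be the set of sources of the induced subgraph G[S], i.e. K = {v ∈ S : no u ∈ S has (u,v) ∈ A}. Then K ⊆ S, desc_G(K) = desc_G(S) = S, no arc of A joins two vertices of K, and K is the unique inclusion-minimal subset of S whose set of descendants equals desc_G(S); in particular K is the unique minimum-cardinality such subset (the kernel κ(S) of S). -/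
open scoped Classical

/-- The set of descendants of `S`: vertices reachable from some vertex of `S`
by a directed path (each vertex is a descendant of itself). -/
noncomputable def descF {V : Type*} [Fintype V] (A : Finset (V × V)) (S : Finset V) :
    Finset V :=
  Finset.univ.filter
    (fun u : V => ∃ x ∈ S, Relation.ReflTransGen (fun a b : V => (a, b) ∈ A) x u)

lemma closed_of_constraint {V : Type*} (A : Finset (V × V)) (S : Finset V)
    (hS : DigraphConstraint A S) {x u : V} (hx : x ∈ S)
    (h : Relation.ReflTransGen (fun a b : V => (a, b) ∈ A) x u) : u ∈ S := by
  induction h with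
  | refl => exact hx
  | tail _ hab ih => exact hS _ ih _ hab

theorem kernel_properties
    {V : Type*} [Fintype V] [DecidableEq V]
    (A : Finset (V × V)) (hloop : ∀ v : V, (v, v) ∉ A)
    -- `G` is a DAG: no directed cycle
    (hdag : ∀ v : V, ¬ Relation.TransGen (fun a b : V => (a, b) ∈ A) v v)
    (S : Finset V) (hS : DigraphConstraint A S)
    -- `K` is the set of sources of the induced subgraph `G[S]`
    (K : Finset V) (hK : K = S.filter (fun x : V => ∀ u ∈ S, (u, x) ∉ A)) :
    K ⊆ S ∧
    descF A K = descF A S ∧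
    descF A S = S ∧
    -- no arc of `A` joins two vertices of `K`
    (∀ u ∈ K, ∀ v ∈ K, (u, v) ∉ A) ∧
    -- `K` is the unique inclusion-minimal subset of `S` whose set of descendants is
    -- `desc_G(S)`: it is contained in every such subset
    (∀ K' : Finset V, K' ⊆ S → descF A K' = descF A S → K ⊆ K') ∧
    -- in particular `K` is the unique minimum-cardinality such subset
    (∀ K' : Finset V, K' ⊆ S → descF A K' = descF A S → K.card ≤ K'.card) ∧
    (∀ K' : Finset V, K' ⊆ S → descF A K' = descF A S → K'.card = K.card → K' = K) := by
  classical
  set step : V → V → Prop := fun a b : V => (a, b) ∈ A with hstep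
  have hKS : K ⊆ S := by
    intro x hx; rw [hK] at hx; exact (Finset.mem_filter.mp hx).1
  have hKmem : ∀ x, x ∈ K ↔ x ∈ S ∧ ∀ u ∈ S, (u, x) ∉ A := by
    intro x; rw [hK]; simp [Finset.mem_filter]
  -- descF A S = S
  have hdescS : descF A S = S := by
    ext u
    simp only [descF, Finset.mem_filter, Finset.mem_univ, true_and]
    constructor
    · rintro ⟨x, hx, hxu⟩; exact closed_of_constraint A S hS hx hxu
    · intro hu; exact ⟨u, hu, Relation.ReflTransGen.refl⟩
  -- well-founded relation: "strict ancestor"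
  have hwf : WellFounded (fun a b : V => Relation.TransGen step a b) := by
    have : IsTrans V (fun a b : V => Relation.TransGen step a b) :=
      ⟨fun a b c h1 h2 => Relation.TransGen.trans h1 h2⟩
    have : IsIrrefl V (fun a b : V => Relation.TransGen step a b) :=
      ⟨fun a h => hdag a h⟩
    exact Finite.wellFounded_of_trans_of_irrefl _
  -- every s ∈ S reachable from a source
  have hreach : ∀ s ∈ S, ∃ k ∈ K, Relation.ReflTransGen step k s := by
    intro s hs
    induction s using hwf.induction with
    | _ s ih =>
      by_cases hsk : ∀ u ∈ S, (u, s) ∉ A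
      · exact ⟨s, (hKmem s).mpr ⟨hs, hsk⟩, Relation.ReflTransGen.refl⟩
      · push_neg at hsk
        obtain ⟨u, huS, hus⟩ := hsk
        obtain ⟨k, hk, hku⟩ := ih u (Relation.TransGen.single hus) huS
        exact ⟨k, hk, hku.tail hus⟩
  have hdescK : descF A K = descF A S := by
    ext u
    simp only [descF, Finset.mem_filter, Finset.mem_univ, true_and]
    constructor
    · rintro ⟨x, hx, hxu⟩; exact ⟨x, hKS hx, hxu⟩
    · rintro ⟨x, hx, hxu⟩
      obtain ⟨k, hk, hkx⟩ := hreach x hx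
      exact ⟨k, hk, hkx.trans hxu⟩
  have hnoarc : ∀ u ∈ K, ∀ v ∈ K, (u, v) ∉ A := by
    intro u hu v hv huv
    exact ((hKmem v).mp hv).2 u (hKS hu) huv
  have hmin : ∀ K' : Finset V, K' ⊆ S → descF A K' = descF A S → K ⊆ K' := by
    intro K' hK'S hK'desc k hk
    have hkS : k ∈ S := hKS hk
    have : k ∈ descF A K' := by
      rw [hK'desc, hdescS]; exact hkS
    simp only [descF, Finset.mem_filter, Finset.mem_univ, true_and] at this
    obtain ⟨x, hx, hxk⟩ := this
    rcases hxk.cases_tail with h | ⟨c, hxc, hck⟩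
    · rwa [← h] at hx
    · exact absurd hck (((hKmem k).mp hk).2 c
        (closed_of_constraint A S hS (hK'S hx) hxc))
  refine ⟨hKS, hdescK, hdescS, hnoarc, hmin, ?_, ?_⟩
  · intro K' h1 h2; exact Finset.card_le_card (hmin K' h1 h2)
  · intro K' h1 h2 h3
    exact (Finset.eq_of_subset_of_card_le (hmin K' h1 h2) h3.le).symm
end

section
/- Let G=(V,E) be a connected simple graph with n = |V| vertices. Define the digraph G' on vertex set V ∪ {v_e : e ∈ E} whose arcs are (u, v_e) for every edge e ∈ E and every endpoint u of e; set weights w(u) = 1 for u ∈ V and w(v_e) = n+1 for e ∈ E, and budget B = n. Then a set S ⊆ V is a maximal independent set of G if and only if S, viewed as a vertex set of G', satisfies the weak digraph constraint, the budget constraint, and is maximal (no strict superset of S in G' satisfies the weak digraph constraint and the budget constraint). -/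
open scoped Classical

/-- Weak digraph constraint for a digraph given by an arc relation: every vertex whose
in-neighborhood is nonempty and contained in `S` belongs to `S`. -/
def WeakDigraphConstraintRel {α : Type*} (R : α → α → Prop) (S : Finset α) : Prop :=
  ∀ x : α, (∃ u : α, R u x) → (∀ u : α, R u x → u ∈ S) → x ∈ S

/-- The arcs of the digraph `G'` built from a simple graph `G`: an arc from each
vertex `u` to the vertex `v_e` of each edge `e` incident to `u`. -/
def redArc {V : Type*} (G : SimpleGraph V) :
    (V ⊕ G.edgeSet) → (V ⊕ G.edgeSet) → Prop :=
  fun a b => ∃ (u : V) (e : G.edgeSet),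
    a = Sum.inl u ∧ b = Sum.inr e ∧ u ∈ (e : Sym2 V)

/-- The weights of `G'`: `1` on original vertices and `n + 1` on edge vertices. -/
def redW {V : Type*} (G : SimpleGraph V) (n : ℕ) : (V ⊕ G.edgeSet) → ℕ :=
  Sum.elim (fun _ => 1) (fun _ => n + 1)

lemma sum_redW_map {V : Type*} (G : SimpleGraph V) (n : ℕ) (A : Finset V) :
    (∑ x ∈ A.map ⟨Sum.inl, Sum.inl_injective⟩, redW G n x) = A.card := by
  rw [Finset.sum_map]
  simp [redW]

theorem maximal_independent_iff_maximal_weak_feasible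
    {V : Type*} [Fintype V] [DecidableEq V]
    (G : SimpleGraph V) (hconn : G.Connected) (S : Finset V) :
    -- `S` is a maximal independent set of `G`
    ((∀ u ∈ S, ∀ v ∈ S, ¬ G.Adj u v) ∧
      (∀ v : V, v ∉ S → ∃ u ∈ S, G.Adj u v)) ↔
    -- iff, viewed as a vertex set of `G'`, it satisfies the weak digraph constraint,
    -- the budget constraint with `B = n`, and is maximal for these two constraints
    (WeakDigraphConstraintRel (redArc G) (S.map ⟨Sum.inl, Sum.inl_injective⟩) ∧
      (∑ x ∈ S.map ⟨Sum.inl, Sum.inl_injective⟩, redW G (Fintype.card V) x)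
        ≤ Fintype.card V ∧
      ¬ ∃ T : Finset (V ⊕ G.edgeSet),
          S.map ⟨Sum.inl, Sum.inl_injective⟩ ⊂ T ∧
          WeakDigraphConstraintRel (redArc G) T ∧
          (∑ x ∈ T, redW G (Fintype.card V) x) ≤ Fintype.card V) := by
  constructor
  · rintro ⟨hind, hdom⟩
    refine ⟨?_, ?_, ?_⟩
    · -- weak constraint
      rintro x ⟨_, u, e, rfl, rfl, hu⟩ hall
      obtain ⟨s, hs⟩ := e
      clear hu
      revert hall hs
      induction s using Sym2.ind with
      | _ a b =>
        intro hs hall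
        have hadj : G.Adj a b := hs
        have ha : Sum.inl a ∈ S.map ⟨Sum.inl, Sum.inl_injective⟩ :=
          hall _ ⟨a, ⟨s(a, b), hs⟩, rfl, rfl, by simp⟩
        have hb : Sum.inl b ∈ S.map ⟨Sum.inl, Sum.inl_injective⟩ :=
          hall _ ⟨b, ⟨s(a, b), hs⟩, rfl, rfl, by simp⟩
        simp only [Finset.mem_map, Function.Embedding.coeFn_mk] at ha hb
        obtain ⟨a', ha', haeq⟩ := ha
        obtain ⟨b', hb', hbeq⟩ := hb
        cases haeq; cases hbeq
        exact absurd hadj (hind _ ha' _ hb')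
    · rw [sum_redW_map]
      exact Finset.card_le_univ S
    · rintro ⟨T, hsub, hweak, hbud⟩
      -- T contains no edge vertex
      have hnoinr : ∀ e : G.edgeSet, Sum.inr e ∉ T := by
        intro e he
        have h1 : redW G (Fintype.card V) (Sum.inr e) ≤
            ∑ x ∈ T, redW G (Fintype.card V) x :=
          Finset.single_le_sum (fun _ _ => Nat.zero_le _) he
        have h2 := le_trans h1 hbud
        simp only [redW, Sum.elim_inr] at h2
        omega
      obtain ⟨x, hxT, hxS⟩ := Finset.exists_of_ssubset hsub
      obtain (v | e) := x
      · have hvS : v ∉ S := by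
          intro hv
          exact hxS (Finset.mem_map_of_mem _ hv)
        obtain ⟨u, huS, hadj⟩ := hdom v hvS
        have he : s(u, v) ∈ G.edgeSet := hadj
        have : Sum.inr (⟨s(u, v), he⟩ : G.edgeSet) ∈ T := by
          apply hweak
          · exact ⟨Sum.inl u, u, ⟨s(u, v), he⟩, rfl, rfl, by simp⟩
          · rintro w ⟨u', e', rfl, heq, hmem⟩
            have he' : e' = ⟨s(u, v), he⟩ := (Sum.inr.injEq _ _ ▸ heq).symm
            subst he'
            simp only [Sym2.mem_iff] at hmem
            rcases hmem with rfl | rfl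
            · exact hsub.1 (Finset.mem_map_of_mem _ huS)
            · exact hxT
        exact hnoinr _ this
      · exact hnoinr e hxT
  · rintro ⟨hweak, hbud, hmax⟩
    have hind : ∀ u ∈ S, ∀ v ∈ S, ¬ G.Adj u v := by
      intro u hu v hv hadj
      have he : s(u, v) ∈ G.edgeSet := hadj
      have : Sum.inr (⟨s(u, v), he⟩ : G.edgeSet) ∈
          S.map ⟨Sum.inl, Sum.inl_injective⟩ := by
        apply hweak
        · exact ⟨Sum.inl u, u, ⟨s(u, v), he⟩, rfl, rfl, by simp⟩
        · rintro w ⟨u', e', rfl, heq, hmem⟩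
          have he' : e' = ⟨s(u, v), he⟩ := (Sum.inr.injEq _ _ ▸ heq).symm
          subst he'
          simp only [Sym2.mem_iff] at hmem
          rcases hmem with rfl | rfl
          · exact Finset.mem_map_of_mem _ hu
          · exact Finset.mem_map_of_mem _ hv
      simp at this
    refine ⟨hind, ?_⟩
    intro v hv
    by_contra h
    push_neg at h
    apply hmax
    refine ⟨(insert v S).map ⟨Sum.inl, Sum.inl_injective⟩, ?_, ?_, ?_⟩
    · exact Finset.map_ssubset_map.mpr (Finset.ssubset_insert hv)
    · -- weak constraint for insert v S
      rintro x ⟨_, u, e, rfl, rfl, hu⟩ hall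
      obtain ⟨s, hs⟩ := e
      clear hu
      revert hall hs
      induction s using Sym2.ind with
      | _ a b =>
        intro hs hall
        have hadj : G.Adj a b := hs
        have ha : Sum.inl a ∈ (insert v S).map ⟨Sum.inl, Sum.inl_injective⟩ :=
          hall _ ⟨a, ⟨s(a, b), hs⟩, rfl, rfl, by simp⟩
        have hb : Sum.inl b ∈ (insert v S).map ⟨Sum.inl, Sum.inl_injective⟩ :=
          hall _ ⟨b, ⟨s(a, b), hs⟩, rfl, rfl, by simp⟩
        simp only [Finset.mem_map, Function.Embedding.coeFn_mk, Finset.mem_insert] at ha hb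
        obtain ⟨a', ha', haeq⟩ := ha
        obtain ⟨b', hb', hbeq⟩ := hb
        cases haeq; cases hbeq
        exfalso
        rcases ha' with rfl | ha' <;> rcases hb' with rfl | hb'
        · exact G.irrefl hadj
        · exact h _ hb' hadj.symm
        · exact h _ ha' hadj
        · exact hind _ ha' _ hb' hadj
    · rw [sum_redW_map]
      exact Finset.card_le_univ _
end

section
/- Let G=(V,E) be a connected simple graph with n = |V| vertices. Define the digraph G' on vertex set V ∪ {v_e : e ∈ E} whose arcs are (u, v_e) for every edge e ∈ E and every endpoint u of e; set weights w(u) = 1 for u ∈ V and w(v_e) = n+1 for e ∈ E, and budget B = n. Then the maximum of w(S) over all sets S ⊆ V ∪ {v_e : e ∈ E} satisfying the weak digraph constraint and the budget constraint equals the independence number α(G) of G. -/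
open scoped Classical

theorem ssgw_value_eq_independence_number
    {V : Type*} [Fintype V] [DecidableEq V]
    (G : SimpleGraph V) (hconn : G.Connected) :
    -- the optimal value of SSGW on `(G', w, B = n)` ...
    ((Finset.univ : Finset (Finset (V ⊕ G.edgeSet))).filter
        (fun S => WeakDigraphConstraintRel (redArc G) S ∧
          (∑ x ∈ S, redW G (Fintype.card V) x) ≤ Fintype.card V)).sup
        (fun S => ∑ x ∈ S, redW G (Fintype.card V) x)
    -- ... equals the independence number `α(G)`
    = ((Finset.univ : Finset (Finset V)).filter
        (fun S => ∀ u ∈ S, ∀ v ∈ S, ¬ G.Adj u v)).sup Finset.card := by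
  classical
  apply le_antisymm
  · apply Finset.sup_le
    intro S hS
    rw [Finset.mem_filter] at hS
    obtain ⟨-, hW, hB⟩ := hS
    have hnoinr : ∀ e : G.edgeSet, Sum.inr e ∉ S := by
      intro e he
      have h1 : redW G (Fintype.card V) (Sum.inr e) ≤
          ∑ x ∈ S, redW G (Fintype.card V) x :=
        Finset.single_le_sum (fun _ _ => Nat.zero_le _) he
      simp only [redW, Sum.elim_inr] at h1 hB
      omega
    set T : Finset V := Finset.univ.filter (fun v => Sum.inl v ∈ S) with hT
    have hST : S = T.image Sum.inl := by
      ext x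
      cases x with
      | inl v => simp [hT]
      | inr e =>
        simp only [Finset.mem_image]
        constructor
        · intro h; exact absurd h (hnoinr e)
        · rintro ⟨a, -, h⟩; exact absurd h (by simp)
    have hsum : ∑ x ∈ S, redW G (Fintype.card V) x = T.card := by
      rw [hST, Finset.sum_image (fun a _ b _ h => Sum.inl.inj h)]
      simp [redW]
    rw [hsum]
    apply Finset.le_sup
    rw [Finset.mem_filter]
    refine ⟨Finset.mem_univ _, ?_⟩
    intro u hu v hv hadj
    simp only [hT, Finset.mem_filter, Finset.mem_univ, true_and] at hu hv
    have he : s(u,v) ∈ G.edgeSet := hadj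
    apply hnoinr ⟨s(u,v), he⟩
    apply hW
    · exact ⟨Sum.inl u, u, ⟨s(u,v), he⟩, rfl, rfl, by simp⟩
    · rintro a ⟨w, e', rfl, heq, hw⟩
      obtain rfl : e' = ⟨s(u,v), he⟩ := (Sum.inr.inj heq).symm
      rcases Sym2.mem_iff.mp hw with rfl | rfl
      · exact hu
      · exact hv
  · apply Finset.sup_le
    intro T hT
    rw [Finset.mem_filter] at hT
    obtain ⟨-, hind⟩ := hT
    have hsum : ∑ x ∈ T.image Sum.inl, redW G (Fintype.card V) x = T.card := by
      rw [Finset.sum_image (fun a _ b _ h => Sum.inl.inj h)]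
      simp [redW]
    have hmem : T.image Sum.inl ∈
        ((Finset.univ : Finset (Finset (V ⊕ G.edgeSet))).filter
          (fun S => WeakDigraphConstraintRel (redArc G) S ∧
            (∑ x ∈ S, redW G (Fintype.card V) x) ≤ Fintype.card V)) := by
      rw [Finset.mem_filter]
      refine ⟨Finset.mem_univ _, ?_, ?_⟩
      · intro x hx hall
        exfalso
        obtain ⟨a, w, e', rfl, rfl, hw⟩ := hx
        rcases e' with ⟨e, he⟩
        revert hall hw
        induction e using Sym2.ind with
        | _ u v =>
          intro hw hall
          have hu : Sum.inl u ∈ T.image Sum.inl :=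
            hall (Sum.inl u) ⟨u, ⟨s(u,v), he⟩, rfl, rfl, by simp⟩
          have hv : Sum.inl v ∈ T.image Sum.inl :=
            hall (Sum.inl v) ⟨v, ⟨s(u,v), he⟩, rfl, rfl, by simp⟩
          simp only [Finset.mem_image] at hu hv
          obtain ⟨u', hu', huu⟩ := hu
          obtain ⟨v', hv', hvv⟩ := hv
          obtain rfl := Sum.inl.inj huu
          obtain rfl := Sum.inl.inj hvv
          exact hind u' hu' v' hv' (G.mem_edgeSet.mp he)
      · rw [hsum]
        calc T.card ≤ (Finset.univ : Finset V).card :=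
              Finset.card_le_card (Finset.subset_univ T)
          _ = Fintype.card V := Finset.card_univ
    calc T.card = ∑ x ∈ T.image Sum.inl, redW G (Fintype.card V) x := hsum.symm
      _ ≤ _ := Finset.le_sup (f := fun S => ∑ x ∈ S, redW G (Fintype.card V) x) hmem
end

section
/- Let G=(V,E) be a connected simple graph with n = |V| vertices. Define the digraph G' on vertex set V ∪ {v_e : e ∈ E} whose arcs are (u, v_e) for every edge e ∈ E and every endpoint u of e; set weights w(u) = 1 for u ∈ V and w(v_e) = n+1 for e ∈ E, and budget B = n. Then the minimum of w(S) over all sets S ⊆ V ∪ {v_e : e ∈ E} that satisfy the weak digraph constraint and the budget constraint and that are maximal (no strict superset satisfies the weak digraph and budget constraints) equals the independent domination number i(G) of G. -/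
open scoped Classical

/-!
An edge vertex weighs `n + 1`, more than the budget `n`, so a feasible set contains only
original vertices; and a set `A ⊆ V` satisfies the weak digraph constraint exactly when no
edge has both ends in `A`, i.e. when `A` is independent. Hence the maximal feasible sets are
the maximal independent sets of `G`, which are exactly its independent dominating sets, and the
weight of such a set is its cardinality.
-/

open Finset

namespace SimpleGraph

variable {V : Type*} (G : SimpleGraph V)

def IsDominatingSet (A : Finset V) : Prop :=
  ∀ v : V, v ∉ A → ∃ u ∈ A, G.Adj u v

variable {G}

theorem isIndepSet_coe_iff {A : Finset V} :
    G.IsIndepSet (A : Set V) ↔ ∀ u ∈ A, ∀ v ∈ A, ¬ G.Adj u v :=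
  ⟨fun h _ hu _ hv huv => h hu hv huv.ne huv, fun h u hu v hv _ => h u hu v hv⟩

theorem IsIndepSet.isDominatingSet_iff {A : Finset V} (hA : G.IsIndepSet (A : Set V)) :
    G.IsDominatingSet A ↔ ∀ B : Finset V, A ⊂ B → ¬ G.IsIndepSet (B : Set V) := by
  constructor
  · rintro hdom B hAB hB
    obtain ⟨v, hvB, hvA⟩ := exists_of_ssubset hAB
    obtain ⟨u, huA, huv⟩ := hdom v hvA
    exact hB (hAB.subset huA) hvB (G.ne_of_adj huv) huv
  · intro hmax v hvA
    by_contra! hnot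
    refine hmax (insert v A) (ssubset_insert hvA) ?_
    rw [coe_insert, isIndepSet_iff, Set.pairwise_insert]
    exact ⟨hA, fun u hu _ => ⟨fun hvu => hnot u hu hvu.symm, hnot u hu⟩⟩

end SimpleGraph

open SimpleGraph

section Reduction

variable {V : Type*} (G : SimpleGraph V)

theorem sum_redW_map_inl (n : ℕ) (A : Finset V) :
    ∑ x ∈ A.map Function.Embedding.inl, redW G n x = #A := by
  simp [redW]

theorem inr_notMem_of_sum_redW_le {n : ℕ} {S : Finset (V ⊕ G.edgeSet)}
    (hS : ∑ x ∈ S, redW G n x ≤ n) (e : G.edgeSet) : Sum.inr e ∉ S := fun he => by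
  have : n + 1 ≤ ∑ x ∈ S, redW G n x := single_le_sum (f := redW G n) (fun _ _ => Nat.zero_le _) he
  omega

theorem weakDigraphConstraintRel_redArc_map_inl_iff (A : Finset V) :
    WeakDigraphConstraintRel (redArc G) (A.map Function.Embedding.inl) ↔
      G.IsIndepSet (A : Set V) := by
  constructor
  · intro hweak u hu v hv _ huv
    have hin : ∀ x, redArc G x (Sum.inr ⟨s(u, v), huv⟩) → x ∈ A.map Function.Embedding.inl := by
      rintro _ ⟨w, _, rfl, he, hw⟩
      cases Sum.inr_injective he
      rcases Sym2.mem_iff.1 hw with rfl | rfl <;> simpa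
    simpa using hweak _ ⟨Sum.inl u, u, _, rfl, rfl, Sym2.mem_mk_left u v⟩ hin
  · rintro hA _ ⟨-, w, ⟨e, he⟩, rfl, rfl, hw⟩ hall
    exfalso
    induction e using Sym2.ind with
    | _ a b =>
      have mem (c : V) (hc : c ∈ s(a, b)) : c ∈ A := by
        simpa using hall (Sum.inl c) ⟨c, ⟨s(a, b), he⟩, rfl, rfl, hc⟩
      exact hA (mem a (Sym2.mem_mk_left a b)) (mem b (Sym2.mem_mk_right a b)) (G.ne_of_adj he) he

variable [Fintype V]

def IsBudgetFeasible (S : Finset (V ⊕ G.edgeSet)) : Prop :=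
  WeakDigraphConstraintRel (redArc G) S ∧ ∑ x ∈ S, redW G (Fintype.card V) x ≤ Fintype.card V

variable {G}

theorem IsBudgetFeasible.eq_map_inl_toLeft {S : Finset (V ⊕ G.edgeSet)}
    (hS : IsBudgetFeasible G S) : S = S.toLeft.map Function.Embedding.inl := by
  ext (u | e)
  · simp
  · simp [inr_notMem_of_sum_redW_le G hS.2 e]

variable (G)

theorem isBudgetFeasible_map_inl_iff (A : Finset V) :
    IsBudgetFeasible G (A.map Function.Embedding.inl) ↔ G.IsIndepSet (A : Set V) := by
  rw [IsBudgetFeasible, weakDigraphConstraintRel_redArc_map_inl_iff, sum_redW_map_inl,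
    and_iff_left (card_le_univ A)]

theorem isBudgetFeasible_map_inl_maximal_iff (A : Finset V) :
    (IsBudgetFeasible G (A.map Function.Embedding.inl) ∧
        ¬ ∃ T, A.map Function.Embedding.inl ⊂ T ∧ IsBudgetFeasible G T) ↔
      G.IsIndepSet (A : Set V) ∧ G.IsDominatingSet A := by
  rw [isBudgetFeasible_map_inl_iff]
  refine and_congr_right fun hA => ?_
  rw [hA.isDominatingSet_iff, not_exists]
  refine ⟨fun h B hAB hB => h _ ⟨map_ssubset_map.2 hAB, (isBudgetFeasible_map_inl_iff G B).2 hB⟩,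
    fun h T ⟨hAT, hT⟩ => ?_⟩
  rw [hT.eq_map_inl_toLeft, map_ssubset_map] at hAT
  rw [hT.eq_map_inl_toLeft, isBudgetFeasible_map_inl_iff] at hT
  exact h _ hAT hT

end Reduction

theorem maximal_ssgw_value_eq_independent_domination_number_general
    {V : Type*} [Fintype V]
    (G : SimpleGraph V) :
    -- the optimal value of Maximal SSGW on `(G', w, B = n)` ...
    sInf {m : ℕ | ∃ S : Finset (V ⊕ G.edgeSet),
        WeakDigraphConstraintRel (redArc G) S ∧
        (∑ x ∈ S, redW G (Fintype.card V) x) ≤ Fintype.card V ∧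
        (¬ ∃ T : Finset (V ⊕ G.edgeSet), S ⊂ T ∧
            WeakDigraphConstraintRel (redArc G) T ∧
            (∑ x ∈ T, redW G (Fintype.card V) x) ≤ Fintype.card V) ∧
        (∑ x ∈ S, redW G (Fintype.card V) x) = m}
    -- ... equals the independent domination number `i(G)`
    = sInf {m : ℕ | ∃ S : Finset V,
        (∀ u ∈ S, ∀ v ∈ S, ¬ G.Adj u v) ∧
        (∀ v : V, v ∉ S → ∃ u ∈ S, G.Adj u v) ∧
        S.card = m} := by
  congr 1
  ext m
  constructor
  · rintro ⟨S, hweak, hbud, hmax, rfl⟩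
    have hS : IsBudgetFeasible G S := ⟨hweak, hbud⟩
    have hSA := hS.eq_map_inl_toLeft
    rw [hSA] at hS hmax ⊢
    obtain ⟨hind, hdom⟩ := (isBudgetFeasible_map_inl_maximal_iff G S.toLeft).1 ⟨hS, hmax⟩
    exact ⟨S.toLeft, isIndepSet_coe_iff.1 hind, hdom, (sum_redW_map_inl G _ _).symm⟩
  · rintro ⟨A, hind, hdom, rfl⟩
    obtain ⟨⟨hweak, hbud⟩, hmax⟩ :=
      (isBudgetFeasible_map_inl_maximal_iff G A).2 ⟨isIndepSet_coe_iff.2 hind, hdom⟩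
    exact ⟨_, hweak, hbud, hmax, sum_redW_map_inl G _ A⟩

theorem maximal_ssgw_value_eq_independent_domination_number
    {V : Type*} [Fintype V] [DecidableEq V]
    (G : SimpleGraph V) (hconn : G.Connected) :
    -- the optimal value of Maximal SSGW on `(G', w, B = n)` ...
    sInf {m : ℕ | ∃ S : Finset (V ⊕ G.edgeSet),
        WeakDigraphConstraintRel (redArc G) S ∧
        (∑ x ∈ S, redW G (Fintype.card V) x) ≤ Fintype.card V ∧
        (¬ ∃ T : Finset (V ⊕ G.edgeSet), S ⊂ T ∧
            WeakDigraphConstraintRel (redArc G) T ∧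
            (∑ x ∈ T, redW G (Fintype.card V) x) ≤ Fintype.card V) ∧
        (∑ x ∈ S, redW G (Fintype.card V) x) = m}
    -- ... equals the independent domination number `i(G)`
    = sInf {m : ℕ | ∃ S : Finset V,
        (∀ u ∈ S, ∀ v ∈ S, ¬ G.Adj u v) ∧
        (∀ v : V, v ∉ S → ∃ u ∈ S, G.Adj u v) ∧
        S.card = m} :=
  maximal_ssgw_value_eq_independent_domination_number_general G
end

section
/- Let X be a finite set, s : X → ℕ with s(x) ≥ 1 for all x, and let B and κ be positive integers with κ ≤ B. Define the digraph T on vertex set X ∪ {r} (r ∉ X) with arcs (x, r) for every x ∈ X, and weights w(x) = s(x) for x ∈ X and w(r) = 0. Then there exists S ⊆ X with ∑_{x∈S} s(x) ≤ κ and ∑_{x∈S} s(x) + s(y) > B for every y ∈ X∖S, if and only if there exists S ⊆ X such that S ∪ {r} satisfies the digraph constraint of T, w(S ∪ {r}) ≤ κ, and no strict superset of S ∪ {r} satisfies both the digraph constraint of T and the budget constraint w(·) ≤ B. -/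
open scoped Classical

/-- Digraph constraint for a digraph given by an arc relation. -/
def DigraphConstraintRel {α : Type*} (R : α → α → Prop) (S : Finset α) : Prop :=
  ∀ x ∈ S, ∀ y : α, R x y → y ∈ S

/-- The arcs of the out-rooted tree `T` on `X ∪ {r}` (with `r = none`):
an arc `(x, r)` for every `x ∈ X`. -/
def optArc {X : Type*} : Option X → Option X → Prop :=
  fun a b => (∃ x : X, a = some x) ∧ b = none

/-- The weights on `X ∪ {r}`: `w(x) = s(x)` for `x ∈ X` and `w(r) = 0`. -/
def optW {X : Type*} (s : X → ℕ) : Option X → ℕ :=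
  fun o => o.elim 0 s

theorem lazy_bureaucrat_iff_maximal_ssg_on_star
    {X : Type*} [Fintype X] [DecidableEq X]
    (s : X → ℕ) (hs : ∀ x : X, 1 ≤ s x)
    (B κ : ℕ) (hB : 0 < B) (hκ : 0 < κ) (hκB : κ ≤ B) :
    (∃ S : Finset X, (∑ x ∈ S, s x) ≤ κ ∧
        ∀ y : X, y ∉ S → (∑ x ∈ S, s x) + s y > B) ↔
    (∃ S : Finset X,
        DigraphConstraintRel optArc (insert none (S.image some)) ∧
        (∑ v ∈ insert none (S.image some), optW s v) ≤ κ ∧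
        ¬ ∃ T : Finset (Option X), insert none (S.image some) ⊂ T ∧
            DigraphConstraintRel optArc T ∧ (∑ v ∈ T, optW s v) ≤ B) := by
  have hsum : ∀ S : Finset X,
      (∑ v ∈ insert none (S.image some), optW s v) = ∑ x ∈ S, s x := by
    intro S
    rw [Finset.sum_insert (by simp)]
    simp [optW, Finset.sum_image (fun a _ b _ h => Option.some_injective X h)]
  have hcon : ∀ T : Finset (Option X), none ∈ T → DigraphConstraintRel optArc T := by
    intro T hT x hx y hy
    obtain ⟨_, rfl⟩ := hy
    exact hT
  constructor
  · rintro ⟨S, h1, h2⟩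
    refine ⟨S, hcon _ (Finset.mem_insert_self _ _), by rw [hsum]; exact h1, ?_⟩
    rintro ⟨T, hsub, -, hTB⟩
    obtain ⟨y, hyT, hyn⟩ := Finset.exists_of_ssubset hsub
    obtain ⟨a, rfl⟩ : ∃ a, y = some a := by
      cases y with
      | none => exact absurd (Finset.mem_insert_self _ _) hyn
      | some a => exact ⟨a, rfl⟩
    have haS : a ∉ S := fun h => hyn (Finset.mem_insert_of_mem (Finset.mem_image_of_mem _ h))
    have : (∑ x ∈ S, s x) + s a ≤ ∑ v ∈ T, optW s v := by
      have hsub2 : insert (some a) (insert none (S.image some)) ⊆ T :=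
        Finset.insert_subset hyT hsub.subset
      calc (∑ x ∈ S, s x) + s a
          = ∑ v ∈ insert (some a) (insert none (S.image some)), optW s v := by
            rw [Finset.sum_insert (by simpa using haS), hsum]; simp [optW, Nat.add_comm]
        _ ≤ _ := Finset.sum_le_sum_of_subset hsub2
    exact absurd (lt_of_lt_of_le (h2 a haS) this) (not_lt.mpr hTB)
  · rintro ⟨S, -, h2, h3⟩
    refine ⟨S, by rw [← hsum]; exact h2, ?_⟩
    intro y hy
    by_contra h
    push_neg at h
    apply h3
    refine ⟨insert (some y) (insert none (S.image some)), ?_, hcon _ (by simp), ?_⟩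
    · refine Finset.ssubset_insert ?_
      simp [hy]
    · rw [Finset.sum_insert (by simpa using
        (fun hh => hy hh : y ∈ S → False)), hsum]
      simpa [optW, Nat.add_comm] using h
end

section
/- Let G=(V,A) be a finite DAG with weight function w : V → ℕ, and let O ⊆ V satisfy the digraph constraint. Let κ(O) = {v_1, …, v_q} be the kernel of O (the set of sources of G[O]) indexed so that the marginal contributions ŵ(v_i) = w(desc_G(v_i) ∖ desc_G({v_1, …, v_{i-1}})) are nonincreasing in i. Then for every j ∈ {1, …, q−1} and every vertex x ∈ O ∖ desc_G({v_1, …, v_j}) one has w(x) ≤ ŵ(v_{j+1}), j·ŵ(v_{j+1}) ≤ w(desc_G({v_1, …, v_j})), and hence j·w(x) ≤ w(O). -/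
open scoped Classical

theorem kernel_marginal_weight_bounds
    {V : Type*} [Fintype V] [DecidableEq V]
    (A : Finset (V × V)) (hloop : ∀ v : V, (v, v) ∉ A)
    -- `G` is a DAG: no directed cycle
    (hdag : ∀ v : V, ¬ Relation.TransGen (fun a b : V => (a, b) ∈ A) v v)
    (w : V → ℕ)
    -- `O` satisfies the digraph constraint
    (O : Finset V) (hO : DigraphConstraint A O)
    -- `v` enumerates the kernel `κ(O)` of `O`, i.e. the sources of `G[O]`
    -- (0-based: paper's `v_i` is `v ⟨i-1⟩`)
    (q : ℕ) (v : Fin q → V) (hv : Function.Injective v)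
    (himg : Finset.image v Finset.univ = O.filter (fun x : V => ∀ u ∈ O, (u, x) ∉ A))
    -- `mw i` is the marginal contribution `ŵ` of the kernel vertex `v i`
    (mw : Fin q → ℕ)
    (hmw : ∀ i : Fin q, mw i =
      ∑ u ∈ descF A {v i} \
          descF A ((Finset.univ.filter (fun t : Fin q => t < i)).image v), w u)
    -- the enumeration is by nonincreasing marginal contribution
    (hmono : ∀ i j : Fin q, i ≤ j → mw j ≤ mw i)
    -- `j` corresponds to the paper's `j ∈ {1, …, q-1}`: the prefix `{v_1, …, v_j}`
    -- is the image of the indices `t < j`, and the paper's `v_{j+1}` is `v j`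
    (j : Fin q) (hj : 1 ≤ (j : ℕ))
    (x : V)
    (hx : x ∈ O \ descF A ((Finset.univ.filter (fun t : Fin q => t < j)).image v)) :
    w x ≤ mw j ∧
    (j : ℕ) * mw j ≤
      (∑ u ∈ descF A ((Finset.univ.filter (fun t : Fin q => t < j)).image v), w u) ∧
    (j : ℕ) * w x ≤ ∑ u ∈ O, w u := by
  set r : V → V → Prop := fun a b => (a, b) ∈ A with hr
  have hmem : ∀ (S : Finset V) (u : V),
      u ∈ descF A S ↔ ∃ a ∈ S, Relation.ReflTransGen r a u := by
    intro S u; simp [descF, hr]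
  -- descendants of members of O stay in O
  have hdesc_in_O : ∀ a ∈ O, ∀ u, Relation.ReflTransGen r a u → u ∈ O := by
    intro a ha u hu
    induction hu with
    | refl => exact ha
    | tail _ hab ih => exact hO _ ih _ hab
  -- the arc relation is well-founded
  have hwf : WellFounded r := by
    haveI : IsTrans V (Relation.TransGen r) := ⟨fun _ _ _ => Relation.TransGen.trans⟩
    haveI : IsIrrefl V (Relation.TransGen r) := ⟨hdag⟩
    exact Subrelation.wf (fun h => Relation.TransGen.single h)
      (Finite.wellFounded_of_trans_of_irrefl _)
  -- every vertex of O is reachable from a kernel vertex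
  have hreach : ∀ x : V, x ∈ O → ∃ t : Fin q, Relation.ReflTransGen r (v t) x := by
    intro x
    induction x using hwf.induction with
    | _ x ih =>
      intro hxO
      by_cases hsrc : ∀ u ∈ O, (u, x) ∉ A
      · have : x ∈ Finset.image v Finset.univ := by
          rw [himg]; exact Finset.mem_filter.mpr ⟨hxO, hsrc⟩
        obtain ⟨t, -, ht⟩ := Finset.mem_image.mp this
        exact ⟨t, ht ▸ Relation.ReflTransGen.refl⟩
      · push_neg at hsrc
        obtain ⟨u, huO, hu⟩ := hsrc
        obtain ⟨t, ht⟩ := ih u hu huO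
        exact ⟨t, ht.tail hu⟩
  -- prefix sum formula
  have hsum : ∀ n : ℕ,
      ∑ u ∈ descF A ((Finset.univ.filter (fun t : Fin q => (t : ℕ) < n)).image v), w u
        = ∑ t ∈ Finset.univ.filter (fun t : Fin q => (t : ℕ) < n), mw t := by
    intro n
    induction n with
    | zero => simp [descF]
    | succ n ih =>
      by_cases hn : n < q
      · set i : Fin q := ⟨n, hn⟩ with hidef
        have hfil : (Finset.univ.filter (fun t : Fin q => (t : ℕ) < n + 1))
            = insert i (Finset.univ.filter (fun t : Fin q => (t : ℕ) < n)) := by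
          ext t
          simp only [Finset.mem_filter, Finset.mem_univ, true_and, Finset.mem_insert]
          constructor
          · intro h
            rcases Nat.lt_succ_iff_lt_or_eq.mp h with h | h
            · exact Or.inr h
            · exact Or.inl (Fin.ext h)
          · rintro (rfl | h)
            · exact Nat.lt_succ_self n
            · exact Nat.lt_succ_of_lt h
        have hi_not : i ∉ Finset.univ.filter (fun t : Fin q => (t : ℕ) < n) := by
          simp [hidef]
        set Pn := descF A ((Finset.univ.filter (fun t : Fin q => (t : ℕ) < n)).image v)
          with hPn
        have hdesc_ins :
            descF A ((insert i (Finset.univ.filter (fun t : Fin q => (t : ℕ) < n))).image v)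
            = Pn ∪ descF A {v i} := by
          ext u
          rw [Finset.mem_union, hPn, hmem, hmem, hmem]
          simp only [Finset.mem_image, Finset.mem_insert, Finset.mem_singleton]
          constructor
          · rintro ⟨a, ⟨t, (hti | ht), rfl⟩, hrel⟩
            · subst hti; exact Or.inr ⟨v i, rfl, hrel⟩
            · exact Or.inl ⟨v t, ⟨t, ht, rfl⟩, hrel⟩
          · rintro (⟨a, ha, hrel⟩ | ⟨a, rfl, hrel⟩)
            · obtain ⟨t, ht, rfl⟩ := ha
              exact ⟨v t, ⟨t, Or.inr ht, rfl⟩, hrel⟩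
            · exact ⟨v i, ⟨i, Or.inl rfl, rfl⟩, hrel⟩
        have hfil2 : (Finset.univ.filter (fun t : Fin q => t < i))
            = Finset.univ.filter (fun t : Fin q => (t : ℕ) < n) := by
          ext t; simp [Fin.lt_def, hidef]
        have hmwi : mw i = ∑ u ∈ descF A {v i} \ Pn, w u := by
          rw [hmw i, hfil2]
        calc ∑ u ∈ descF A
              ((Finset.univ.filter (fun t : Fin q => (t : ℕ) < n + 1)).image v), w u
            = ∑ u ∈ Pn ∪ descF A {v i}, w u := by rw [hfil, hdesc_ins]
          _ = ∑ u ∈ Pn, w u + ∑ u ∈ descF A {v i} \ Pn, w u := by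
              rw [← Finset.sum_union Finset.disjoint_sdiff,
                Finset.union_sdiff_self_eq_union]
          _ = ∑ t ∈ Finset.univ.filter (fun t : Fin q => (t : ℕ) < n + 1), mw t := by
              rw [ih, ← hmwi, hfil, Finset.sum_insert hi_not, Nat.add_comm]
      · have hfil : (Finset.univ.filter (fun t : Fin q => (t : ℕ) < n + 1))
            = Finset.univ.filter (fun t : Fin q => (t : ℕ) < n) := by
          ext t
          have := t.isLt
          simp only [Finset.mem_filter, Finset.mem_univ, true_and]
          omega
        rw [hfil, ih]
  have hjfil : (Finset.univ.filter (fun t : Fin q => t < j))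
      = Finset.univ.filter (fun t : Fin q => (t : ℕ) < (j : ℕ)) := by
    ext t
    simp only [Finset.mem_filter, Finset.mem_univ, true_and]
    exact Fin.lt_def
  obtain ⟨hxO, hxnd⟩ := Finset.mem_sdiff.mp hx
  -- minimal kernel index reaching x
  set T : Finset (Fin q) :=
    Finset.univ.filter (fun t : Fin q => Relation.ReflTransGen r (v t) x) with hT
  have hTne : T.Nonempty := by
    obtain ⟨t, ht⟩ := hreach x hxO
    exact ⟨t, Finset.mem_filter.mpr ⟨Finset.mem_univ t, ht⟩⟩
  set t0 : Fin q := T.min' hTne with ht0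
  have hrt : Relation.ReflTransGen r (v t0) x :=
    (Finset.mem_filter.mp (T.min'_mem hTne)).2
  have hjt : j ≤ t0 := by
    by_contra h
    push_neg at h
    apply hxnd
    rw [hmem]
    exact ⟨v t0, Finset.mem_image.mpr
      ⟨t0, Finset.mem_filter.mpr ⟨Finset.mem_univ t0, h⟩, rfl⟩, hrt⟩
  have hxnmin : x ∉ descF A ((Finset.univ.filter (fun t : Fin q => t < t0)).image v) := by
    intro hmem'
    rw [hmem] at hmem'
    obtain ⟨a, ha, hrel⟩ := hmem'
    obtain ⟨s, hs, rfl⟩ := Finset.mem_image.mp ha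
    have hst : s < t0 := (Finset.mem_filter.mp hs).2
    have : t0 ≤ s := T.min'_le s (Finset.mem_filter.mpr ⟨Finset.mem_univ s, hrel⟩)
    exact absurd hst (not_lt.mpr this)
  have h1 : w x ≤ mw j := by
    have hw1 : w x ≤ mw t0 := by
      rw [hmw t0]
      refine Finset.single_le_sum (fun _ _ => Nat.zero_le _) ?_
      rw [Finset.mem_sdiff]
      exact ⟨(hmem _ x).mpr ⟨v t0, Finset.mem_singleton_self _, hrt⟩, hxnmin⟩
    exact hw1.trans (hmono j t0 hjt)
  -- cardinality of the prefix
  have hcard : (Finset.univ.filter (fun t : Fin q => t < j)).card = (j : ℕ) := by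
    have h : Finset.image Fin.val (Finset.univ.filter (fun t : Fin q => t < j))
        = Finset.range (j : ℕ) := by
      ext a
      simp only [Finset.mem_image, Finset.mem_filter, Finset.mem_univ, true_and,
        Finset.mem_range, Fin.lt_def]
      constructor
      · rintro ⟨t, ht, rfl⟩; exact ht
      · intro ha; exact ⟨⟨a, lt_trans ha j.isLt⟩, ha, rfl⟩
    rw [← Finset.card_range (j : ℕ), ← h,
      Finset.card_image_of_injective _ Fin.val_injective]
  have h2 : (j : ℕ) * mw j ≤
      ∑ u ∈ descF A ((Finset.univ.filter (fun t : Fin q => t < j)).image v), w u := by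
    rw [hjfil, hsum (j : ℕ), ← hjfil]
    calc (j : ℕ) * mw j
        = (Finset.univ.filter (fun t : Fin q => t < j)).card • mw j := by
          rw [hcard, smul_eq_mul]
      _ ≤ ∑ t ∈ Finset.univ.filter (fun t : Fin q => t < j), mw t := by
          refine Finset.card_nsmul_le_sum _ _ _ ?_
          intro t ht
          exact hmono t j (le_of_lt (Finset.mem_filter.mp ht).2)
      _ = ∑ t ∈ Finset.univ.filter (fun t : Fin q => (t : ℕ) < (j : ℕ)), mw t := by
          rw [hjfil]
  have hsubO : descF A ((Finset.univ.filter (fun t : Fin q => t < j)).image v) ⊆ O := by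
    intro u hu
    rw [hmem] at hu
    obtain ⟨a, ha, hrel⟩ := hu
    obtain ⟨s, -, rfl⟩ := Finset.mem_image.mp ha
    have hvs : v s ∈ O := by
      have : v s ∈ Finset.image v Finset.univ :=
        Finset.mem_image.mpr ⟨s, Finset.mem_univ s, rfl⟩
      rw [himg] at this
      exact (Finset.mem_filter.mp this).1
    exact hdesc_in_O _ hvs _ hrel
  refine ⟨h1, h2, ?_⟩
  calc (j : ℕ) * w x ≤ (j : ℕ) * mw j := Nat.mul_le_mul_left _ h1
    _ ≤ ∑ u ∈ descF A ((Finset.univ.filter (fun t : Fin q => t < j)).image v), w u := h2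
    _ ≤ ∑ u ∈ O, w u := Finset.sum_le_sum_of_subset hsubO
end
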